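/- arXiv:2402.10451 — 2 statements merged into one kernel-verified Lean document; each statement's English description precedes it below -/
import Mathlib

section
/- Let f₁,…,f_n be monotone linear functions. A permutation σ of [n] is locally optimal if and only if for all integers ℓ,m,r with 1≤ℓ≤m<r≤n such that both g = f_{σ(m)}∘⋯∘f_{σ(ℓ)} and h = f_{σ(r)}∘⋯∘f_{σ(m+1)} are non-identical, one has θ(h) − θ(g) ∈ [0,π]_{2π}. -/
/-- A linear function `x ↦ a*x + b`. -/
structure LinFun where
  a : ℝ
  b : ℝ

namespace LinFun

/-- Evaluation of a linear function. -/
def eval (f : LinFun) (x : ℝ) : ℝ := f.a * x + f.b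

/-- Composition: `h.comp g` is the linear function `x ↦ h (g x)`. -/
def comp (h g : LinFun) : LinFun := ⟨h.a * g.a, h.a * g.b + h.b⟩

/-- The identical linear function `x ↦ x`. -/
def idf : LinFun := ⟨1, 0⟩

/-- `f` is the identical function (equivalently, its vector `(β f, 1 - α f)` is `(0,0)`,
i.e. its angle is `⊥`). -/
def IsId (f : LinFun) : Prop := f = idf

/-- The Euclidean norm of the vector `(β f, 1 - α f)` associated to `f`. -/
noncomputable def vecNorm (f : LinFun) : ℝ := Real.sqrt (f.b ^ 2 + (1 - f.a) ^ 2)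

/-- The polar angle in `[0, 2π)` of the vector `(β f, 1 - α f)` associated to `f`
(meaningful only when `f` is not identical). -/
noncomputable def theta (f : LinFun) : ℝ :=
  if 0 ≤ Complex.arg ⟨f.b, 1 - f.a⟩ then Complex.arg ⟨f.b, 1 - f.a⟩
  else Complex.arg ⟨f.b, 1 - f.a⟩ + 2 * Real.pi

end LinFun

/-- Congruence of angles modulo `2π`: `x ≡_{2π} y`. -/
def Cong (x y : ℝ) : Prop := ∃ k : ℤ, x - y = 2 * Real.pi * k

/-- The set `[t1, t2]_{2π}`. -/
def Icc2pi (t1 t2 : ℝ) : Set ℝ :=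
  {θ | ∃ l1 l2 : ℝ, Cong l1 t1 ∧ Cong l2 t2 ∧ 0 ≤ l2 - l1 ∧ l2 - l1 < 2 * Real.pi ∧
    θ ∈ Set.Icc l1 l2}

/-- The set `(t1, t2)_{2π}`. -/
def Ioo2pi (t1 t2 : ℝ) : Set ℝ :=
  {θ | ∃ l1 l2 : ℝ, Cong l1 t1 ∧ Cong l2 t2 ∧ 0 ≤ l2 - l1 ∧ l2 - l1 < 2 * Real.pi ∧
    θ ∈ Set.Ioo l1 l2}

/-- Composite of a list of linear functions: `compList [g₁, …, g_m] = g_m ∘ ⋯ ∘ g₁`. -/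
def compList (L : List LinFun) : LinFun := L.foldl (fun acc g => g.comp acc) LinFun.idf

/-- The list `f_{σ(1)}, …, f_{σ(n)}` (0-indexed positions). -/
def permList {n : ℕ} (f : Fin n → LinFun) (σ : Equiv.Perm (Fin n)) : List LinFun :=
  List.ofFn fun i => f (σ i)

/-- `f^σ = f_{σ(n)} ∘ ⋯ ∘ f_{σ(1)}`. -/
def permComp {n : ℕ} (f : Fin n → LinFun) (σ : Equiv.Perm (Fin n)) : LinFun :=
  compList (permList f σ)

/-- The composite of the functions at the (0-indexed) positions `a, a+1, …, b` of `σ`: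
`f_{σ(b)} ∘ ⋯ ∘ f_{σ(a)}` (in 0-indexed notation). -/
def segComp {n : ℕ} (f : Fin n → LinFun) (σ : Equiv.Perm (Fin n)) (a b : ℕ) : LinFun :=
  compList (((permList f σ).drop a).take (b + 1 - a))

/-- The composite corresponding to the `k`-shift `σ_k` of `σ`:
`f^{σ_k} = f_{σ(k)} ∘ ⋯ ∘ f_{σ(1)} ∘ f_{σ(n)} ∘ ⋯ ∘ f_{σ(k+1)}` (1-indexed notation). -/
def shiftComp {n : ℕ} (f : Fin n → LinFun) (σ : Equiv.Perm (Fin n)) (k : ℕ) : LinFun :=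
  compList ((permList f σ).rotate k)

/-- `σ` is a minimum (optimal) permutation for `f₁, …, f_n`. -/
def IsMinimum {n : ℕ} (f : Fin n → LinFun) (σ : Equiv.Perm (Fin n)) : Prop :=
  ∀ ρ : Equiv.Perm (Fin n), (permComp f σ).b ≤ (permComp f ρ).b

/-- `μ` belongs to the neighbourhood `N(σ)`: it is obtained from `σ` by swapping two
adjacent blocks of positions, `(l, …, m)` and `(m+1, …, r)` (0-indexed, `l ≤ m < r < n`). -/
def InNbhd {n : ℕ} (σ μ : Equiv.Perm (Fin n)) : Prop :=
  ∃ (l m r : ℕ) (_ : l ≤ m) (_ : m < r) (_ : r < n),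
    (∀ i : Fin n, (i.val < l ∨ r < i.val) → μ i = σ i) ∧
    (∀ i : Fin n, ∀ _ : l ≤ i.val, ∀ _ : i.val < l + r - m,
      μ i = σ ⟨i.val + m + 1 - l, by omega⟩) ∧
    (∀ i : Fin n, ∀ _ : l + r - m ≤ i.val, ∀ _ : i.val ≤ r,
      μ i = σ ⟨i.val + m - r, by omega⟩)

/-- `σ` is locally optimal for `f₁, …, f_n`. -/
def LocallyOptimal {n : ℕ} (f : Fin n → LinFun) (σ : Equiv.Perm (Fin n)) : Prop :=
  ∀ μ : Equiv.Perm (Fin n), InNbhd σ μ → (permComp f σ).b ≤ (permComp f μ).b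

/-- `σ` is counterclockwise: ignoring the identical functions, some rotation of the sequence
of angles `θ(f_{σ(1)}), …, θ(f_{σ(n)})` is nondecreasing. -/
def Counterclockwise {n : ℕ} (f : Fin n → LinFun) (σ : Equiv.Perm (Fin n)) : Prop :=
  ∃ c : ℕ, ∀ i j : Fin n, ¬ (f (σ i)).IsId → ¬ (f (σ j)).IsId →
    ((c ≤ i.val ∧ i ≤ j) ∨ (i ≤ j ∧ j.val < c) ∨ (c ≤ i.val ∧ j.val < c)) →
    (f (σ i)).theta ≤ (f (σ j)).theta

/-- `f₁, …, f_n` are colinear: all vectors lie on one line through the origin. -/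
def Colinear {n : ℕ} (f : Fin n → LinFun) : Prop :=
  ∃ lam : ℝ, ∀ i : Fin n,
    (f i).IsId ∨ Cong ((f i).theta) lam ∨ Cong ((f i).theta) (lam + Real.pi)

/-- `f₁, …, f_n` are potentially identical: some counterclockwise permutation composes
to the identical function. -/
def PotentiallyIdentical {n : ℕ} (f : Fin n → LinFun) : Prop :=
  ∃ σ : Equiv.Perm (Fin n), Counterclockwise f σ ∧ (permComp f σ).IsId

/-- The ε-perturbation `f^{(ε)}` of a linear function. -/
noncomputable def epsPert (f : LinFun) (ε : ℝ) : LinFun := if f.a = 0 then ⟨ε, f.b⟩ else f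

/-!
Write `f^σ = S ∘ h ∘ g ∘ P`, where `g` and `h` are the composites of the blocks `l, …, m` and
`m+1, …, r`; the neighbour swapping them has composite `S ∘ g ∘ h ∘ P`. A direct computation
gives `β(S ∘ g ∘ h ∘ P) - β(S ∘ h ∘ g ∘ P) = α(S) · (β(g)(1 - α(h)) - (1 - α(g)) β(h))`, and
`α(S) > 0`, so `σ` beats that neighbour iff the cross product of `vec g` and `vec h` is
nonnegative. That cross product is `‖vec g‖ ‖vec h‖ sin(θ(h) - θ(g))`, and `sin x ≥ 0` exactly
when `x ∈ [0, π]_{2π}`; if `g` or `h` is identical the cross product vanishes.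
-/

namespace LinFun

def cross (g h : LinFun) : ℝ := g.b * (1 - h.a) - (1 - g.a) * h.b

theorem comp_assoc (f g h : LinFun) : (f.comp g).comp h = f.comp (g.comp h) := by
  simp only [comp, mk.injEq]
  constructor <;> ring

theorem comp_idf (f : LinFun) : f.comp idf = f := by
  simp [comp, idf]

theorem idf_comp (f : LinFun) : idf.comp f = f := by
  simp [comp, idf]

theorem b_comp_comp_sub_b_comp_comp (S P g h : LinFun) :
    (((S.comp g).comp h).comp P).b - (((S.comp h).comp g).comp P).b = S.a * cross g h := by
  simp only [comp, cross]
  ring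

theorem b_comp_comp_le_iff {S : LinFun} (hS : 0 < S.a) (P g h : LinFun) :
    (((S.comp h).comp g).comp P).b ≤ (((S.comp g).comp h).comp P).b ↔ 0 ≤ cross g h := by
  rw [← sub_nonneg, b_comp_comp_sub_b_comp_comp, mul_nonneg_iff_of_pos_left hS]

end LinFun

open LinFun

theorem foldl_comp_eq_compList_comp (L : List LinFun) (f : LinFun) :
    L.foldl (fun acc g => g.comp acc) f = (compList L).comp f := by
  induction L generalizing f with
  | nil => simp [compList, idf_comp]
  | cons g L ih =>
    simp only [compList, List.foldl_cons] at ih ⊢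
    rw [ih, ih (g.comp idf), comp_idf, comp_assoc]

theorem compList_append (A B : List LinFun) :
    compList (A ++ B) = (compList B).comp (compList A) := by
  rw [compList, List.foldl_append, ← compList, foldl_comp_eq_compList_comp]

theorem compList_a_pos {L : List LinFun} (hL : ∀ g ∈ L, 0 < g.a) : 0 < (compList L).a := by
  induction L with
  | nil => simp [compList, idf]
  | cons g L ih =>
    rw [← List.singleton_append, compList_append]
    have hg : (compList [g]).a = g.a := by simp [compList, comp, idf]
    simp only [comp, hg]
    exact mul_pos (ih fun x hx => hL x (List.mem_cons_of_mem _ hx)) (hL g List.mem_cons_self)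

theorem compList_b_le_iff_cross (P G H : List LinFun) {S : List LinFun}
    (hS : ∀ g ∈ S, 0 < g.a) :
    (compList (P ++ (G ++ (H ++ S)))).b ≤ (compList (P ++ (H ++ (G ++ S)))).b ↔
      0 ≤ cross (compList G) (compList H) := by
  simp only [compList_append]
  exact b_comp_comp_le_iff (compList_a_pos hS) _ _ _

open Real

theorem mem_Icc2pi_zero_pi_iff {x : ℝ} :
    x ∈ Icc2pi 0 π ↔ ∃ k : ℤ, x - k * (2 * π) ∈ Set.Icc 0 π := by
  constructor
  · rintro ⟨l₁, l₂, ⟨k₁, hk₁⟩, ⟨k₂, hk₂⟩, h₀, h₂π, hx₁, hx₂⟩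
    have hk : k₂ = k₁ := by
      have hlt : ((k₂ - k₁ : ℤ) : ℝ) < 1 := by push_cast; nlinarith [pi_pos]
      have hgt : (-1 : ℝ) < ((k₂ - k₁ : ℤ) : ℝ) := by push_cast; nlinarith [pi_pos]
      have : k₂ - k₁ < 1 := by exact_mod_cast hlt
      have : -1 < k₂ - k₁ := by exact_mod_cast hgt
      omega
    subst hk
    exact ⟨k₂, by linarith, by linarith⟩
  · rintro ⟨k, hk₁, hk₂⟩
    exact ⟨k * (2 * π), k * (2 * π) + π, ⟨k, by ring⟩, ⟨k, by ring⟩, by linarith,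
      by linarith [pi_pos], by linarith, by linarith⟩

theorem sin_nonneg_iff_exists_int {x : ℝ} :
    0 ≤ sin x ↔ ∃ k : ℤ, x - k * (2 * π) ∈ Set.Icc 0 π := by
  constructor
  · intro hx
    set k := toIcoDiv two_pi_pos 0 x
    have hmod : x - k * (2 * π) ∈ Set.Ico 0 (2 * π) := by
      rw [← self_sub_toIcoMod_eq_mul, sub_sub_cancel]
      simpa using toIcoMod_mem_Ico two_pi_pos 0 x
    refine ⟨k, hmod.1, not_lt.1 fun hπ => ?_⟩
    have hneg := sin_neg_of_neg_of_neg_pi_lt (x := x - k * (2 * π) - 2 * π)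
      (by linarith [hmod.2]) (by linarith)
    rw [sin_sub_two_pi, sin_sub_int_mul_two_pi] at hneg
    linarith
  · rintro ⟨k, hk⟩
    rw [← sin_sub_int_mul_two_pi x k]
    exact sin_nonneg_of_mem_Icc hk

theorem mem_Icc2pi_zero_pi_iff_sin_nonneg {x : ℝ} : x ∈ Icc2pi 0 π ↔ 0 ≤ sin x := by
  rw [mem_Icc2pi_zero_pi_iff, sin_nonneg_iff_exists_int]

namespace LinFun

def vec (f : LinFun) : ℂ := ⟨f.b, 1 - f.a⟩

theorem vec_ne_zero {f : LinFun} (hf : ¬ f.IsId) : f.vec ≠ 0 := by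
  refine fun h0 => hf ?_
  obtain ⟨a, b⟩ := f
  simp only [vec, Complex.ext_iff, Complex.zero_re, Complex.zero_im] at h0
  simp only [IsId, idf, mk.injEq]
  constructor <;> linarith [h0.1, h0.2]

theorem exists_theta_eq_arg_add (f : LinFun) : ∃ k : ℤ, f.theta = f.vec.arg + k * (2 * π) := by
  unfold theta
  split_ifs
  · exact ⟨0, by simp [vec]⟩
  · exact ⟨1, by simp [vec]⟩

theorem sin_theta_sub_theta_mul_norm {g h : LinFun} (hg : ¬ g.IsId) (hh : ¬ h.IsId) :
    sin (h.theta - g.theta) * (‖g.vec‖ * ‖h.vec‖) = cross g h := by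
  obtain ⟨kg, hkg⟩ := exists_theta_eq_arg_add g
  obtain ⟨kh, hkh⟩ := exists_theta_eq_arg_add h
  rw [hkg, hkh, show h.vec.arg + kh * (2 * π) - (g.vec.arg + kg * (2 * π))
      = h.vec.arg - g.vec.arg + (kh - kg : ℤ) * (2 * π) by push_cast; ring,
    sin_add_int_mul_two_pi, sin_sub, Complex.sin_arg, Complex.sin_arg,
    Complex.cos_arg (vec_ne_zero hg), Complex.cos_arg (vec_ne_zero hh)]
  have : ‖g.vec‖ ≠ 0 := norm_ne_zero_iff.2 (vec_ne_zero hg)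
  have : ‖h.vec‖ ≠ 0 := norm_ne_zero_iff.2 (vec_ne_zero hh)
  field_simp
  simp only [vec, cross]
  ring

theorem theta_sub_theta_mem_Icc2pi_iff {g h : LinFun} (hg : ¬ g.IsId) (hh : ¬ h.IsId) :
    h.theta - g.theta ∈ Icc2pi 0 π ↔ 0 ≤ cross g h := by
  rw [mem_Icc2pi_zero_pi_iff_sin_nonneg, ← sin_theta_sub_theta_mul_norm hg hh,
    mul_nonneg_iff_of_pos_right (by positivity [vec_ne_zero hg, vec_ne_zero hh])]

theorem cross_nonneg_iff {g h : LinFun} :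
    0 ≤ cross g h ↔ (¬ g.IsId → ¬ h.IsId → h.theta - g.theta ∈ Icc2pi 0 π) := by
  refine ⟨fun hc hg hh => (theta_sub_theta_mem_Icc2pi_iff hg hh).2 hc, fun hθ => ?_⟩
  by_cases hg : g.IsId
  · obtain rfl : g = idf := hg
    simp [idf, cross]
  by_cases hh : h.IsId
  · obtain rfl : h = idf := hh
    simp [idf, cross]
  exact (theta_sub_theta_mem_Icc2pi_iff hg hh).1 (hθ hg hh)

end LinFun

theorem List.take_append_blocks {α : Type*} (L : List α) {a b c : ℕ} (hab : a ≤ b)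
    (hbc : b ≤ c) :
    L.take a ++ ((L.drop a).take (b - a) ++ ((L.drop b).take (c - b) ++ L.drop c)) = L := by
  have drop_take_append_drop : ∀ a b, a ≤ b → (L.drop a).take (b - a) ++ L.drop b = L.drop a :=
    fun a b hab => by
      conv_rhs => rw [← List.take_append_drop (b - a) (L.drop a)]
      rw [List.drop_drop, Nat.add_sub_cancel' hab]
  rw [drop_take_append_drop b c hbc, drop_take_append_drop a b hab, List.take_append_drop]

def blockSwapIndex (l m r i : ℕ) : ℕ :=
  if i < l then i
  else if i < l + r - m then i + m + 1 - l
  else if i ≤ r then i + m - r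
  else i

theorem blockSwapIndex_injective {l m r : ℕ} (hlm : l ≤ m) (hmr : m < r) :
    Function.Injective (blockSwapIndex l m r) := by
  intro i j h
  simp only [blockSwapIndex] at h
  split_ifs at h <;> omega

noncomputable def blockSwap {n : ℕ} (l m r : ℕ) (hlm : l ≤ m) (hmr : m < r) (hrn : r < n) :
    Equiv.Perm (Fin n) :=
  have hlt (i : Fin n) : blockSwapIndex l m r i < n := by
    have := i.isLt
    simp only [blockSwapIndex]
    split_ifs <;> omega
  Equiv.ofBijective (fun i => ⟨blockSwapIndex l m r i, hlt i⟩) <| Finite.injective_iff_bijective.1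
    fun i j h => Fin.ext (blockSwapIndex_injective hlm hmr (Fin.mk.inj h))

def IsBlockSwap {n : ℕ} (σ μ : Equiv.Perm (Fin n)) (l m r : ℕ) (hmr : m < r)
    (hrn : r < n) : Prop :=
  (∀ i : Fin n, (i.val < l ∨ r < i.val) → μ i = σ i) ∧
  (∀ i : Fin n, ∀ _ : l ≤ i.val, ∀ _ : i.val < l + r - m,
    μ i = σ ⟨i.val + m + 1 - l, by omega⟩) ∧
  (∀ i : Fin n, ∀ _ : l + r - m ≤ i.val, ∀ _ : i.val ≤ r,
    μ i = σ ⟨i.val + m - r, by omega⟩)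

theorem isBlockSwap_mul_blockSwap {n : ℕ} (σ : Equiv.Perm (Fin n)) {l m r : ℕ} (hlm : l ≤ m)
    (hmr : m < r) (hrn : r < n) :
    IsBlockSwap σ (σ * blockSwap l m r hlm hmr hrn) l m r hmr hrn := by
  refine ⟨?_, ?_, ?_⟩ <;>
  · intros
    simp only [Equiv.Perm.mul_apply, blockSwap, Equiv.ofBijective_apply, blockSwapIndex]
    congr 1
    ext
    split_ifs <;> dsimp only <;> omega

theorem permList_of_isBlockSwap {n : ℕ} (f : Fin n → LinFun) {σ μ : Equiv.Perm (Fin n)}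
    {l m r : ℕ} {hmr : m < r} {hrn : r < n} (hlm : l ≤ m) (hμ : IsBlockSwap σ μ l m r hmr hrn) :
    permList f μ = (permList f σ).take l ++ (((permList f σ).drop (m + 1)).take (r + 1 - (m + 1))
      ++ (((permList f σ).drop l).take (m + 1 - l) ++ (permList f σ).drop (r + 1))) := by
  obtain ⟨hout, hleft, hright⟩ := hμ
  simp only [Fin.forall_iff] at hout hleft hright
  apply List.ext_getElem
  · simp only [permList, List.length_append, List.length_take, List.length_drop, List.length_ofFn]
    omega
  intro i hi _
  have hin : i < n := by simpa [permList] using hi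
  simp only [permList, List.getElem_append, List.length_take, List.length_drop,
    List.length_ofFn, List.getElem_take, List.getElem_drop, List.getElem_ofFn]
  split_ifs
  · rw [hout i hin (by omega)]
  · rw [hleft i hin (by omega) (by omega)]
    congr 3
    omega
  · rw [hright i hin (by omega) (by omega)]
    congr 3
    omega
  · rw [hout i hin (by omega)]
    congr 3
    omega

theorem permComp_b_le_iff_cross {n : ℕ} {f : Fin n → LinFun} (hf : ∀ i, 0 < (f i).a)
    {σ μ : Equiv.Perm (Fin n)} {l m r : ℕ} {hmr : m < r} {hrn : r < n} (hlm : l ≤ m)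
    (hμ : IsBlockSwap σ μ l m r hmr hrn) :
    (permComp f σ).b ≤ (permComp f μ).b ↔
      0 ≤ cross (segComp f σ l m) (segComp f σ (m + 1) r) := by
  have hpos : ∀ g ∈ (permList f σ).drop (r + 1), 0 < g.a := by
    intro g hg
    obtain ⟨i, rfl⟩ := List.mem_ofFn.1 (List.mem_of_mem_drop hg)
    exact hf _
  have key := compList_b_le_iff_cross ((permList f σ).take l)
    (((permList f σ).drop l).take (m + 1 - l))
    (((permList f σ).drop (m + 1)).take (r + 1 - (m + 1))) hpos
  rwa [List.take_append_blocks _ (by omega) (by omega), ← permList_of_isBlockSwap f hlm hμ] at key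

theorem locallyOptimal_iff_cross_nonneg {n : ℕ} {f : Fin n → LinFun} (hf : ∀ i, 0 < (f i).a)
    (σ : Equiv.Perm (Fin n)) :
    LocallyOptimal f σ ↔ ∀ l m r : ℕ, l ≤ m → m < r → r < n →
      0 ≤ cross (segComp f σ l m) (segComp f σ (m + 1) r) := by
  constructor
  · intro hσ l m r hlm hmr hrn
    have hμ := isBlockSwap_mul_blockSwap σ hlm hmr hrn
    exact (permComp_b_le_iff_cross hf hlm hμ).1 (hσ _ ⟨l, m, r, hlm, hmr, hrn, hμ⟩)
  · rintro hcross μ ⟨l, m, r, hlm, hmr, hrn, (hμ : IsBlockSwap σ μ l m r hmr hrn)⟩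
    exact (permComp_b_le_iff_cross hf hlm hμ).2 (hcross l m r hlm hmr hrn)

/-- angle characterization of local optimality. Positions are 0-indexed:
the two adjacent blocks are `l, …, m` and `m+1, …, r` with `l ≤ m < r < n`. -/
theorem stmt5 {n : ℕ} (f : Fin n → LinFun) (hf : ∀ i, 0 < (f i).a)
    (σ : Equiv.Perm (Fin n)) :
    LocallyOptimal f σ ↔
      ∀ l m r : ℕ, l ≤ m → m < r → r < n →
        ¬ (segComp f σ l m).IsId → ¬ (segComp f σ (m + 1) r).IsId →
        (segComp f σ (m + 1) r).theta - (segComp f σ l m).theta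
          ∈ Icc2pi 0 Real.pi := by
  simp only [locallyOptimal_iff_cross_nonneg hf, cross_nonneg_iff]
end

section
/- Let f₁,…,f_n be monotone linear functions and let σ be a counterclockwise permutation of [n] such that f^σ(x)=x for all x. Then every counterclockwise permutation μ of [n] satisfies f^μ(x)=x for all x. -/
/-!
Two linear functions commute exactly when their vectors `(β, 1 - α)` are parallel, so functions
of equal angle commute, and the identical function commutes with everything. A counterclockwise
order becomes, after a cyclic rotation, an order sorted by angle; two sorted arrangements of the
same functions differ only by reordering blocks of equal angle, so their composites agree.
Finally `g ∘ h = id` forces `h ∘ g = id`, so being identical is invariant under rotation.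
-/

namespace LinFun

@[ext] lemma ext {g h : LinFun} (ha : g.a = h.a) (hb : g.b = h.b) : g = h := by
  cases g; cases h; simp_all

/-- Multiplication is composition in diagrammatic order, `g * h = h ∘ g`, so that
`compList L = L.prod`. -/
instance : Mul LinFun := ⟨fun g h => h.comp g⟩

instance : One LinFun := ⟨idf⟩

lemma mul_def (g h : LinFun) : g * h = ⟨h.a * g.a, h.a * g.b + h.b⟩ := rfl

lemma one_def : (1 : LinFun) = idf := rfl

instance : Monoid LinFun where
  mul_assoc _ _ _ := by ext <;> simp only [mul_def] <;> ring
  one_mul _ := by ext <;> simp [mul_def, one_def, idf]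
  mul_one _ := by ext <;> simp [mul_def, one_def, idf]

instance : IsDedekindFiniteMonoid LinFun where
  mul_eq_one_symm {g h} hgh := by
    rw [mul_def, one_def, idf, LinFun.mk.injEq] at hgh ⊢
    obtain ⟨ha, hb⟩ := hgh
    constructor
    · linear_combination ha
    · linear_combination g.a * hb - g.b * ha

lemma commute_iff {g h : LinFun} : Commute g h ↔ g.b * (1 - h.a) = h.b * (1 - g.a) := by
  rw [Commute, SemiconjBy, mul_def, mul_def, LinFun.mk.injEq]
  constructor
  · rintro ⟨-, hb⟩; linear_combination -hb
  · intro hv; exact ⟨mul_comm _ _, by linear_combination -hv⟩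

lemma vec_ne_zero_s9 {g : LinFun} (hg : g ≠ 1) : (⟨g.b, 1 - g.a⟩ : ℂ) ≠ 0 := by
  intro h
  rw [Complex.ext_iff] at h
  exact hg (ext (by simp [one_def, idf] at h ⊢; linarith) (by simpa [one_def, idf] using h.1))

lemma arg_eq_of_theta_eq {g h : LinFun} (ht : g.theta = h.theta) :
    Complex.arg ⟨g.b, 1 - g.a⟩ = Complex.arg ⟨h.b, 1 - h.a⟩ := by
  unfold theta at ht
  have := Complex.neg_pi_lt_arg (⟨g.b, 1 - g.a⟩ : ℂ)
  have := Complex.arg_le_pi (⟨g.b, 1 - g.a⟩ : ℂ)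
  have := Complex.neg_pi_lt_arg (⟨h.b, 1 - h.a⟩ : ℂ)
  have := Complex.arg_le_pi (⟨h.b, 1 - h.a⟩ : ℂ)
  have := Real.pi_pos
  split_ifs at ht <;> linarith

lemma commute_of_theta_eq {g h : LinFun} (hg : g ≠ 1) (hh : h ≠ 1) (ht : g.theta = h.theta) :
    Commute g h := by
  have harg := arg_eq_of_theta_eq ht
  rw [Complex.arg_eq_arg_iff (vec_ne_zero_s9 hg) (vec_ne_zero_s9 hh), ← Complex.ofReal_div] at harg
  set t : ℝ := ‖(⟨h.b, 1 - h.a⟩ : ℂ)‖ / ‖(⟨g.b, 1 - g.a⟩ : ℂ)‖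
  have hre : t * g.b = h.b := by simpa using congrArg Complex.re harg
  have him : t * (1 - g.a) = 1 - h.a := by simpa using congrArg Complex.im harg
  rw [commute_iff]
  linear_combination (1 - g.a) * hre - g.b * him

/-- The identical function has angle `⊥`, comparable to every angle in both directions. -/
def AngleLE (g h : LinFun) : Prop := g = 1 ∨ h = 1 ∨ g.theta ≤ h.theta

lemma commute_of_angleLE {g h : LinFun} (hgh : AngleLE g h) (hhg : AngleLE h g) :
    Commute g h := by
  rcases eq_or_ne g 1 with rfl | hg
  · exact Commute.one_left h
  rcases eq_or_ne h 1 with rfl | hh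
  · exact Commute.one_right g
  have h₁ : g.theta ≤ h.theta := by simpa [AngleLE, hg, hh] using hgh
  have h₂ : h.theta ≤ g.theta := by simpa [AngleLE, hg, hh] using hhg
  exact commute_of_theta_eq hg hh (le_antisymm h₁ h₂)

end LinFun

lemma compList_eq_prod (L : List LinFun) : compList L = L.prod :=
  List.prod_eq_foldl.symm

theorem List.Perm.prod_eq_of_pairwise {M : Type*} [Monoid M] {R : M → M → Prop}
    (hR : ∀ ⦃x y⦄, R x y → R y x → Commute x y) :
    ∀ {l₁ l₂ : List M}, l₁.Perm l₂ → l₁.Pairwise R → l₂.Pairwise R → l₁.prod = l₂.prod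
  | [], _, hp, _, _ => by rw [hp.nil_eq]
  | g :: t, l₂, hp, h₁, h₂ => by
    obtain ⟨A, B, rfl⟩ := List.mem_iff_append.mp (hp.subset List.mem_cons_self)
    have ht : t.Perm (A ++ B) := (List.perm_cons g).mp (hp.trans List.perm_middle)
    have hA : ∀ x ∈ A, Commute x g := fun x hx =>
      hR ((List.pairwise_append.mp h₂).2.2 x hx g List.mem_cons_self)
        ((List.pairwise_cons.mp h₁).1 x (ht.symm.subset (List.mem_append_left B hx)))
    have h₂' : (A ++ B).Pairwise R := h₂.sublist ((List.sublist_cons_self g B).append_left A)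
    rw [List.prod_cons, ht.prod_eq_of_pairwise hR (List.pairwise_cons.mp h₁).2 h₂',
      List.prod_append, List.prod_append, List.prod_cons, ← mul_assoc, ← mul_assoc,
      (Commute.list_prod_left A g hA).eq]

lemma List.prod_rotate_eq_one_iff {M : Type*} [Monoid M] [IsDedekindFiniteMonoid M]
    (l : List M) (k : ℕ) : (l.rotate k).prod = 1 ↔ l.prod = 1 := by
  conv_rhs => rw [← List.take_append_drop (k % l.length) l]
  rw [List.rotate_eq_drop_append_take_mod, List.prod_append, List.prod_append, mul_eq_one_comm]

lemma List.pairwise_rotate_of_cyclic {α : Type*} {R : α → α → Prop} {l : List α} {c : ℕ}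
    (hc : c ≤ l.length)
    (h : ∀ p q (hp : p < l.length) (hq : q < l.length),
      (c ≤ p ∧ p ≤ q) ∨ (p ≤ q ∧ q < c) ∨ (c ≤ p ∧ q < c) → R l[p] l[q]) :
    (l.rotate c).Pairwise R := by
  rw [List.rotate_eq_drop_append_take hc, List.pairwise_append, List.pairwise_iff_getElem,
    List.pairwise_iff_getElem]
  refine ⟨fun i j hi hj hij => ?_, fun i j hi hj hij => ?_, fun x hx y hy => ?_⟩
  · rw [List.length_drop] at hi hj
    rw [List.getElem_drop, List.getElem_drop]
    exact h _ _ _ _ (Or.inl ⟨by omega, by omega⟩)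
  · rw [List.length_take] at hi hj
    rw [List.getElem_take, List.getElem_take]
    exact h _ _ _ _ (Or.inr (Or.inl ⟨by omega, by omega⟩))
  · obtain ⟨i, hi, rfl⟩ := List.getElem_of_mem hx
    obtain ⟨j, hj, rfl⟩ := List.getElem_of_mem hy
    rw [List.length_drop] at hi
    rw [List.length_take] at hj
    rw [List.getElem_drop, List.getElem_take]
    exact h _ _ _ _ (Or.inr (Or.inr ⟨by omega, by omega⟩))

lemma Counterclockwise.exists_pairwise_rotate {n : ℕ} {f : Fin n → LinFun}
    {σ : Equiv.Perm (Fin n)} (h : Counterclockwise f σ) :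
    ∃ k, ((permList f σ).rotate k).Pairwise LinFun.AngleLE := by
  obtain ⟨c, hc⟩ := h
  have hlen : (permList f σ).length = n := List.length_ofFn
  refine ⟨min c n, List.pairwise_rotate_of_cyclic (by omega) fun p q hp hq hpq => ?_⟩
  simp only [permList, List.getElem_ofFn]
  by_cases hp1 : f (σ ⟨p, by omega⟩) = 1
  · exact Or.inl hp1
  by_cases hq1 : f (σ ⟨q, by omega⟩) = 1
  · exact Or.inr (Or.inl hq1)
  exact Or.inr (Or.inr (hc _ _ hp1 hq1 (by simp only [Fin.mk_le_mk]; omega)))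

lemma permList_perm {n : ℕ} (f : Fin n → LinFun) (σ μ : Equiv.Perm (Fin n)) :
    (permList f σ).Perm (permList f μ) :=
  (σ.ofFn_comp_perm f).trans (μ.ofFn_comp_perm f).symm

lemma isId_permComp_iff {n : ℕ} (f : Fin n → LinFun) (σ : Equiv.Perm (Fin n)) :
    (permComp f σ).IsId ↔ (permList f σ).prod = 1 := by
  rw [permComp, compList_eq_prod]
  rfl

theorem stmt9_general {n : ℕ} (f : Fin n → LinFun)
    (σ : Equiv.Perm (Fin n)) (hccw : Counterclockwise f σ)
    (hid : (permComp f σ).IsId) :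
    ∀ μ : Equiv.Perm (Fin n), Counterclockwise f μ → (permComp f μ).IsId := by
  intro μ hμ
  obtain ⟨k, hk⟩ := hccw.exists_pairwise_rotate
  obtain ⟨k', hk'⟩ := hμ.exists_pairwise_rotate
  have hrot : ((permList f σ).rotate k).prod = ((permList f μ).rotate k').prod :=
    (((permList f σ).rotate_perm k).trans
      ((permList_perm f σ μ).trans ((permList f μ).rotate_perm k').symm)).prod_eq_of_pairwise
      (fun _ _ => LinFun.commute_of_angleLE) hk hk'
  rw [isId_permComp_iff] at hid ⊢
  rwa [← List.prod_rotate_eq_one_iff _ k', ← hrot, List.prod_rotate_eq_one_iff]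

/-- if some counterclockwise permutation composes to the identity, every
counterclockwise permutation does. -/
theorem stmt9 {n : ℕ} (f : Fin n → LinFun) (hf : ∀ i, 0 < (f i).a)
    (σ : Equiv.Perm (Fin n)) (hccw : Counterclockwise f σ)
    (hid : (permComp f σ).IsId) :
    ∀ μ : Equiv.Perm (Fin n), Counterclockwise f μ → (permComp f μ).IsId :=
  stmt9_general f σ hccw hid
end
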